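/- arXiv:2303.13473 — 2 statements merged into one kernel-verified Lean document; each statement's English description precedes it below -/
import Mathlib

section
/- If s is transitive and some member of s is not a member of itself, then (assuming the modified regularity axiom) there is a member v of s such that v is not a member of itself and every member of v is a member of itself (i.e., a set of individuals is a member of s). -/
def IsTransitive {S : Type*} (mem : S → S → Prop) (s : S) : Prop :=
  ∀ u : S, mem u s → ∀ w : S, mem w u → mem w s

theorem stmt_13 (S : Type*) (mem : S → S → Prop)
    (reg : ∀ s : S, (∃ u : S, mem u s ∧ ¬ mem u u) →
      ∃ v : S, mem v s ∧ ¬ mem v v ∧ ∀ u : S, mem u v → mem u s → mem u u)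
    (s : S) (hs : IsTransitive mem s) (h : ∃ u : S, mem u s ∧ ¬ mem u u) :
    ∃ v : S, mem v s ∧ ¬ mem v v ∧ ∀ u : S, mem u v → mem u u := by
  obtain ⟨v, hvs, hvv, hv⟩ := reg s h
  exact ⟨v, hvs, hvv, fun u hu => hv u hu (hs v hvs u hu)⟩
end

section
/- Assuming pairing, the individuals axiom, extensional equality and substitutivity, and the powerset axiom (Pv has as members exactly the subsets of v), if s is an individual then Ps = s. -/
theorem stmt_17 (S : Type*) (mem : S → S → Prop) (pair : S → S → S) (P : S → S)
    (hpair : ∀ s t u : S, mem u (pair s t) ↔ (u = s ∨ u = t))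
    (hP : ∀ s u : S, mem u (P s) ↔ ∀ w : S, mem w u → mem w s)
    (ind : ∀ s : S, mem s s → ∀ u : S, mem u s → u = s)
    (ext : ∀ s t : S, (∀ u, mem u s ↔ mem u t) → s = t)
    (inhab : ∀ s : S, ∃ u : S, mem u s)
    (s : S) (hs : mem s s) :
    P s = s := by
  apply ext
  intro u
  constructor
  · intro hu
    have hsub := (hP s u).mp hu
    obtain ⟨w, hw⟩ := inhab u
    have hws : w = s := ind s hs w (hsub w hw)
    have hsu : mem s u := hws ▸ hw
    have : u = s := ext u s (fun v => ⟨fun hv => hsub v hv,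
      fun hv => (ind s hs v hv) ▸ hsu⟩)
    exact this ▸ hs
  · intro hu
    have : u = s := ind s hs u hu
    subst this
    exact (hP u u).mpr (fun w hw => hw)
end
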